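/- arXiv:2210.05846 — 3 statements merged into one kernel-verified Lean document; each statement's English description precedes it below -/
import Mathlib

section
/- Let w ∈ ℝ, u = w - ⌊w⌋, and let f(v) = Σ_{i=1}^n l_i² (a_i + c_i (v - w))² for fixed reals l_i, a_i, c_i. Then min(f(⌊w⌋), f(⌈w⌉)) ≤ Σ_{i=1}^n l_i² a_i² + Σ_{i=1}^n l_i² c_i² u(1-u). -/
/-! Write `u` for the fractional part of `w`, so that `⌊w⌋ - w = -u` and `⌊w⌋ + 1 - w = 1 - u`.
Averaging the two candidate values with weights `1 - u` and `u` (the expectation over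
`v = ⌊w⌋ + z`, `z ~ Bernoulli u`) gives, term by term, `a² + c² u (1 - u)`: the cross terms
cancel because `z - u` has mean zero, and `u (1 - u)` is its variance. The minimum of the two
values is at most this average. -/

open Finset

theorem min_le_weighted_average {α : Type*} [Ring α] [LinearOrder α] [IsOrderedRing α]
    {t : α} (ht₀ : 0 ≤ t) (ht₁ : t ≤ 1) (x y : α) :
    min x y ≤ (1 - t) * x + t * y :=
  calc min x y = (1 - t) * min x y + t * min x y := by noncomm_ring
    _ ≤ (1 - t) * x + t * y :=
      add_le_add (mul_le_mul_of_nonneg_left (min_le_left x y) (sub_nonneg.mpr ht₁))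
        (mul_le_mul_of_nonneg_left (min_le_right x y) ht₀)

theorem bernoulli_mean_sq_affine {R : Type*} [CommRing R] (a c u : R) :
    (1 - u) * (a + c * -u) ^ 2 + u * (a + c * (1 - u)) ^ 2 = a ^ 2 + c ^ 2 * (u * (1 - u)) := by
  ring

theorem bernoulli_mean_weighted_sum_sq_affine {ι R : Type*} [CommRing R] (s : Finset ι)
    (l a c : ι → R) (u : R) :
    (1 - u) * ∑ i ∈ s, l i ^ 2 * (a i + c i * -u) ^ 2
        + u * ∑ i ∈ s, l i ^ 2 * (a i + c i * (1 - u)) ^ 2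
      = ∑ i ∈ s, l i ^ 2 * a i ^ 2 + (∑ i ∈ s, l i ^ 2 * c i ^ 2) * (u * (1 - u)) := by
  simp only [mul_sum, sum_mul, ← sum_add_distrib]
  refine sum_congr rfl fun i _ => ?_
  linear_combination l i ^ 2 * bernoulli_mean_sq_affine (a i) (c i) u

/-- Rounding one coordinate: min over v ∈ {⌊w⌋, ⌊w⌋+1} of
f(v) = Σ l_i² (a_i + c_i (v - w))² is at most Σ l_i² a_i² + Σ l_i² c_i² u(1-u),
where u = w - ⌊w⌋. -/
theorem min_floor_ceil_bound (n : ℕ) (l a c : ℕ → ℝ) (w : ℝ) :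
    min
      (∑ i ∈ Finset.range n, (l i) ^ 2 * (a i + c i * ((⌊w⌋ : ℝ) - w)) ^ 2)
      (∑ i ∈ Finset.range n, (l i) ^ 2 * (a i + c i * (((⌊w⌋ : ℝ) + 1) - w)) ^ 2)
    ≤ (∑ i ∈ Finset.range n, (l i) ^ 2 * (a i) ^ 2)
      + (∑ i ∈ Finset.range n, (l i) ^ 2 * (c i) ^ 2) * ((w - ⌊w⌋) * (1 - (w - ⌊w⌋))) := by
  have h_floor : (⌊w⌋ : ℝ) - w = -Int.fract w := by rw [← Int.self_sub_floor]; ring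
  have h_ceil : (⌊w⌋ : ℝ) + 1 - w = 1 - Int.fract w := by rw [← Int.self_sub_floor]; ring
  rw [h_floor, h_ceil, Int.self_sub_floor, ← bernoulli_mean_weighted_sum_sq_affine]
  exact min_le_weighted_average (Int.fract_nonneg w) (Int.fract_lt_one w).le _ _
end

section
/- Suppose w₁,…,w_p ∈ ℝ and integers w⁺₁,…,w⁺_p are chosen sequentially so that for each k, w⁺_k ∈ argmin over v ∈ {⌊w_k⌋, ⌈w_k⌉} of Σ_{i=1}^n l_i² (Σ_{j=1}^{k-1} x_{ij}(w⁺_j - w_j) + x_{ik}(v - w_k))². Then for every k ≤ p: Σ_{i=1}^n l_i² (Σ_{j=1}^k x_{ij}(w⁺_j - w_j))² ≤ Σ_{i=1}^n Σ_{j=1}^k l_i² x_{ij}² u_j (1 - u_j), where u_j = w_j - ⌊w_j⌋. -/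
/-!
With `u = fract w_k`, rounding `w_k` down with weight `1 - u` and up with weight `u` is unbiased,
so the weighted average of the two candidate errors is the error so far plus the variance term
`Σ_i l_i² x_{ik}² u (1 - u)`. The minimizing choice does no worse than this average, and the
increments telescope over `k`.
-/

open Finset Int

/-- `E (r + a (V - t))² = r² + a² Var V` for `V` the unbiased random rounding of `t`. -/
lemma floor_ceil_average_sq (r a t : ℝ) :
    (1 - fract t) * (r + a * (⌊t⌋ - t)) ^ 2 + fract t * (r + a * (⌈t⌉ - t)) ^ 2
      = r ^ 2 + a ^ 2 * (fract t * (1 - fract t)) := by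
  have hfloor : (⌊t⌋ : ℝ) - t = -fract t := by rw [← self_sub_floor]; ring
  rcases fract_eq_zero_or_add_one_sub_ceil t with h | h
  · rw [hfloor, h]; ring
  · have hceil : (⌈t⌉ : ℝ) - t = 1 - fract t := by rw [h]; ring
    rw [hfloor, hceil]; ring

lemma le_sum_sq_add_of_le_floor_of_le_ceil {ι : Type*} (s : Finset ι) (c r a : ι → ℝ) (t S : ℝ)
    (hfloor : S ≤ ∑ i ∈ s, c i * (r i + a i * (⌊t⌋ - t)) ^ 2)
    (hceil : S ≤ ∑ i ∈ s, c i * (r i + a i * (⌈t⌉ - t)) ^ 2) :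
    S ≤ ∑ i ∈ s, c i * r i ^ 2 + ∑ i ∈ s, c i * a i ^ 2 * (fract t * (1 - fract t)) := by
  calc S = (1 - fract t) * S + fract t * S := by ring
    _ ≤ (1 - fract t) * ∑ i ∈ s, c i * (r i + a i * (⌊t⌋ - t)) ^ 2
          + fract t * ∑ i ∈ s, c i * (r i + a i * (⌈t⌉ - t)) ^ 2 := by
      have : 0 ≤ 1 - fract t := sub_nonneg.mpr (fract_lt_one t).le
      gcongr
    _ = ∑ i ∈ s, c i * r i ^ 2 + ∑ i ∈ s, c i * a i ^ 2 * (fract t * (1 - fract t)) := by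
      simp only [mul_sum, ← sum_add_distrib]
      refine sum_congr rfl fun i _ => ?_
      linear_combination c i * floor_ceil_average_sq (r i) (a i) t

theorem sequential_rounding_invariant_general (n p : ℕ) (x : ℕ → ℕ → ℝ) (l : ℕ → ℝ)
    (w : ℕ → ℝ) (wp : ℕ → ℤ)
    (hmin : ∀ k < p, ∀ v ∈ ({⌊w k⌋, ⌈w k⌉} : Set ℤ),
      ∑ i ∈ Finset.range n, (l i) ^ 2 *
        ((∑ j ∈ Finset.range k, x i j * ((wp j : ℝ) - w j)) + x i k * ((wp k : ℝ) - w k)) ^ 2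
      ≤ ∑ i ∈ Finset.range n, (l i) ^ 2 *
        ((∑ j ∈ Finset.range k, x i j * ((wp j : ℝ) - w j)) + x i k * ((v : ℝ) - w k)) ^ 2) :
    ∀ k ≤ p,
      ∑ i ∈ Finset.range n, (l i) ^ 2 *
        (∑ j ∈ Finset.range k, x i j * ((wp j : ℝ) - w j)) ^ 2
      ≤ ∑ i ∈ Finset.range n, ∑ j ∈ Finset.range k,
          (l i) ^ 2 * (x i j) ^ 2 * ((w j - ⌊w j⌋) * (1 - (w j - ⌊w j⌋))) := by
  set err : ℕ → ℝ := fun k =>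
    ∑ i ∈ range n, l i ^ 2 * (∑ j ∈ range k, x i j * ((wp j : ℝ) - w j)) ^ 2 with herr
  have increment_le : ∀ k < p, err (k + 1) - err k
      ≤ ∑ i ∈ range n, l i ^ 2 * x i k ^ 2 * (fract (w k) * (1 - fract (w k))) := by
    intro k hk
    have := le_sum_sq_add_of_le_floor_of_le_ceil (range n) (fun i => l i ^ 2)
      (fun i => ∑ j ∈ range k, x i j * ((wp j : ℝ) - w j)) (fun i => x i k) (w k) _
      (hmin k hk _ (by simp)) (hmin k hk _ (by simp))
    simp only [herr, sum_range_succ]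
    linarith
  intro k hk
  calc err k = ∑ j ∈ range k, (err (j + 1) - err j) := by
        rw [sum_range_sub]; simp [herr]
    _ ≤ ∑ j ∈ range k, ∑ i ∈ range n, l i ^ 2 * x i j ^ 2 * (fract (w j) * (1 - fract (w j))) :=
      sum_le_sum fun j hj => increment_le j ((mem_range.mp hj).trans_le hk)
    _ = _ := sum_comm

/-- Sequential rounding invariant: if each coordinate w⁺_k is chosen among
{⌊w_k⌋, ⌈w_k⌉} minimizing the partial weighted squared error, then for every k ≤ p,
Σ_i l_i² (Σ_{j<k} x_{ij}(w⁺_j - w_j))² ≤ Σ_i Σ_{j<k} l_i² x_{ij}² u_j(1-u_j). -/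
theorem sequential_rounding_invariant (n p : ℕ) (x : ℕ → ℕ → ℝ) (l : ℕ → ℝ)
    (w : ℕ → ℝ) (wp : ℕ → ℤ)
    (hmem : ∀ k < p, wp k = ⌊w k⌋ ∨ wp k = ⌈w k⌉)
    (hmin : ∀ k < p, ∀ v ∈ ({⌊w k⌋, ⌈w k⌉} : Set ℤ),
      ∑ i ∈ Finset.range n, (l i) ^ 2 *
        ((∑ j ∈ Finset.range k, x i j * ((wp j : ℝ) - w j)) + x i k * ((wp k : ℝ) - w k)) ^ 2
      ≤ ∑ i ∈ Finset.range n, (l i) ^ 2 *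
        ((∑ j ∈ Finset.range k, x i j * ((wp j : ℝ) - w j)) + x i k * ((v : ℝ) - w k)) ^ 2) :
    ∀ k ≤ p,
      ∑ i ∈ Finset.range n, (l i) ^ 2 *
        (∑ j ∈ Finset.range k, x i j * ((wp j : ℝ) - w j)) ^ 2
      ≤ ∑ i ∈ Finset.range n, ∑ j ∈ Finset.range k,
          (l i) ^ 2 * (x i j) ^ 2 * ((w j - ⌊w j⌋) * (1 - (w j - ⌊w j⌋))) :=
  sequential_rounding_invariant_general n p x l w wp hmin
end

section
/- Let L(w) = Σ_{i=1}^n log(1 + exp(-y_i ⟨x_i, w⟩)) with y_i ∈ {-1, +1} and x_i ∈ ℝ^p. Suppose w, w⁺ ∈ ℝ^p satisfy ⌊w_j⌋ ≤ w⁺_j ≤ ⌈w_j⌉ componentwise (interpreting ⌈w_j⌉ = ⌊w_j⌋+1 when w_j ∉ ℤ and ⌈w_j⌉ = w_j otherwise). Define γ_{ij} = ⌊w_j⌋ if y_i x_{ij} > 0 and γ_{ij} = ⌈w_j⌉ otherwise, and l_i = 1/(1 + exp(y_i ⟨x_i, γ_i⟩)). Then y_i ⟨x_i, w⁺⟩ ≥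 y_i ⟨x_i, γ_i⟩ for every i, and L(w⁺) - L(w) ≤ Σ_{i=1}^n l_i |y_i ⟨x_i, w⁺ - w⟩|. -/
/-!
Coordinatewise, `a * v` over `v ∈ [l, u]` is smallest at `v = l` when `a > 0` and at `v = u`
otherwise, so the corner `γ_i` minimises `y_i⟨x_i, ·⟩` over the hypercube, which contains both
`w` and `w⁺`. The loss `g t = log (1 + exp (-t))` has derivative `-sigmoid (-t)`, whose absolute
value decreases in `t`; on `[c, ∞)` it is therefore `sigmoid (-c)`-Lipschitz, and
`sigmoid (-c) = 1 / (1 + exp c)`. Summing the mean value bounds over the samples gives the claim.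
-/

open Real Finset

lemma mul_ite_pos_le_mul {l u v : ℝ} (hl : l ≤ v) (hu : v ≤ u) (a : ℝ) :
    a * (if 0 < a then l else u) ≤ a * v := by
  split_ifs with ha
  · exact mul_le_mul_of_nonneg_left hl ha.le
  · exact mul_le_mul_of_nonpos_left hu (not_lt.mp ha)

lemma mul_sum_mul_ite_pos_le {ι : Type*} (s : Finset ι) (c : ℝ) {a l u v : ι → ℝ}
    (hl : ∀ j ∈ s, l j ≤ v j) (hu : ∀ j ∈ s, v j ≤ u j) :
    c * ∑ j ∈ s, a j * (if 0 < c * a j then l j else u j) ≤ c * ∑ j ∈ s, a j * v j := by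
  simp only [mul_sum, ← mul_assoc]
  exact sum_le_sum fun j hj => mul_ite_pos_le_mul (hl j hj) (hu j hj) _

lemma hasDerivAt_log_one_add_exp_neg (t : ℝ) :
    HasDerivAt (fun t => log (1 + exp (-t))) (-sigmoid (-t)) t := by
  have hinner : HasDerivAt (fun t => 1 + exp (-t)) (-exp (-t)) t := by
    simpa using ((hasDerivAt_neg t).exp).const_add 1
  convert hinner.log (by positivity) using 1
  rw [← sigmoid_mul_rexp_neg, sigmoid_def]
  ring

lemma abs_log_one_add_exp_neg_sub_le {a b c : ℝ} (ha : c ≤ a) (hb : c ≤ b) :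
    |log (1 + exp (-b)) - log (1 + exp (-a))| ≤ sigmoid (-c) * |b - a| := by
  refine Convex.norm_image_sub_le_of_norm_hasDerivWithin_le
    (fun t _ => (hasDerivAt_log_one_add_exp_neg t).hasDerivWithinAt) (fun t ht => ?_)
    (convex_Ici c) ha hb
  rw [norm_neg, norm_of_nonneg (sigmoid_nonneg _)]
  exact sigmoid_le (neg_le_neg ht)

theorem logistic_loss_hypercube_lipschitz_bound_general (n p : ℕ) (x : ℕ → ℕ → ℝ) (y : ℕ → ℝ)
    (w wp : ℕ → ℝ)
    (hlb : ∀ j, (⌊w j⌋ : ℝ) ≤ wp j) (hub : ∀ j, wp j ≤ (⌈w j⌉ : ℝ)) :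
    (∀ i, y i * ∑ j ∈ Finset.range p, x i j *
        (if 0 < y i * x i j then (⌊w j⌋ : ℝ) else (⌈w j⌉ : ℝ))
      ≤ y i * ∑ j ∈ Finset.range p, x i j * wp j) ∧
    (∑ i ∈ Finset.range n, Real.log (1 + Real.exp (-(y i) * ∑ j ∈ Finset.range p, x i j * wp j)))
      - (∑ i ∈ Finset.range n, Real.log (1 + Real.exp (-(y i) * ∑ j ∈ Finset.range p, x i j * w j)))
    ≤ ∑ i ∈ Finset.range n,
        (1 / (1 + Real.exp (y i * ∑ j ∈ Finset.range p, x i j *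
          (if 0 < y i * x i j then (⌊w j⌋ : ℝ) else (⌈w j⌉ : ℝ))))) *
        |y i * ∑ j ∈ Finset.range p, x i j * (wp j - w j)| := by
  have corner_le_wp (i : ℕ) := mul_sum_mul_ite_pos_le (range p) (y i) (a := x i)
    (fun j _ => hlb j) (fun j _ => hub j)
  have corner_le_w (i : ℕ) := mul_sum_mul_ite_pos_le (range p) (y i) (a := x i)
    (fun j _ => Int.floor_le (w j)) (fun j _ => Int.le_ceil (w j))
  refine ⟨corner_le_wp, ?_⟩
  rw [← sum_sub_distrib]
  gcongr with i
  have one_div_one_add_exp (c : ℝ) : 1 / (1 + exp c) = sigmoid (-c) := by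
    rw [sigmoid_def, neg_neg, one_div]
  simp only [neg_mul, mul_sub, sum_sub_distrib, one_div_one_add_exp]
  exact (le_abs_self _).trans (abs_log_one_add_exp_neg_sub_le (corner_le_w i) (corner_le_wp i))

/-- If w⁺ lies componentwise in [⌊w_j⌋, ⌈w_j⌉], with γ_{ij} the corner of the
hypercube minimizing y_i⟨x_i,·⟩ and l_i = 1/(1+exp(y_i⟨x_i,γ_i⟩)), then
y_i⟨x_i,w⁺⟩ ≥ y_i⟨x_i,γ_i⟩ for all i, and
L(w⁺) - L(w) ≤ Σ_i l_i |y_i ⟨x_i, w⁺ - w⟩|. -/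
theorem logistic_loss_hypercube_lipschitz_bound (n p : ℕ) (x : ℕ → ℕ → ℝ) (y : ℕ → ℝ)
    (hy : ∀ i, y i = 1 ∨ y i = -1) (w wp : ℕ → ℝ)
    (hlb : ∀ j, (⌊w j⌋ : ℝ) ≤ wp j) (hub : ∀ j, wp j ≤ (⌈w j⌉ : ℝ)) :
    (∀ i, y i * ∑ j ∈ Finset.range p, x i j *
        (if 0 < y i * x i j then (⌊w j⌋ : ℝ) else (⌈w j⌉ : ℝ))
      ≤ y i * ∑ j ∈ Finset.range p, x i j * wp j) ∧
    (∑ i ∈ Finset.range n, Real.log (1 + Real.exp (-(y i) * ∑ j ∈ Finset.range p, x i j * wp j)))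
      - (∑ i ∈ Finset.range n, Real.log (1 + Real.exp (-(y i) * ∑ j ∈ Finset.range p, x i j * w j)))
    ≤ ∑ i ∈ Finset.range n,
        (1 / (1 + Real.exp (y i * ∑ j ∈ Finset.range p, x i j *
          (if 0 < y i * x i j then (⌊w j⌋ : ℝ) else (⌈w j⌉ : ℝ))))) *
        |y i * ∑ j ∈ Finset.range p, x i j * (wp j - w j)| :=
  logistic_loss_hypercube_lipschitz_bound_general n p x y w wp hlb hub
end
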